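/- arXiv:2403.14079 — 2 statements merged into one kernel-verified Lean document; each statement's English description precedes it below -/
import Mathlib

section
/- Let n ∈ ℝ² be a unit vector, let v ∈ ℝ² be nonzero with v · n = 0, let a ∈ ℝ² satisfy a · n = 0, and let g ∈ ℝ² satisfy (D(v) g) · n = 0. Then [(E(v) ⊗ a) g] · n = 0, i.e., Σ_{i=1}^{2} n_i Σ_{j=1}^{2} (Σ_{k=1}^{2} ∂_{v_k} D_{ij}(v) a_k) g_j = 0. -/
open scoped BigOperators

/-- Euclidean norm of a vector in ℝ². -/
noncomputable def norm2 (v : Fin 2 → ℝ) : ℝ := Real.sqrt (∑ i, v i ^ 2)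

/-- The 2D Bear–Scheidegger diffusion–dispersion tensor. -/
noncomputable def bsD (φ dm dt dl : ℝ) (v : Fin 2 → ℝ) (i j : Fin 2) : ℝ :=
  (φ * dm + dt * norm2 v) * (if i = j then (1 : ℝ) else 0) + (dl - dt) * v i * v j / norm2 v

/-- The partial derivative `∂_{v_k} D_{ij}(v)`. -/
noncomputable def pD (φ dm dt dl : ℝ) (v : Fin 2 → ℝ) (i j k : Fin 2) : ℝ :=
  fderiv ℝ (fun u => bsD φ dm dt dl u i j) v (Pi.single k 1)

/-!
The sum `∑ₖ ∂_{v_k} D_{ij}(v) a_k` is the derivative of `D_{ij}` at `v` in the direction `a`, so the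
left-hand side is the derivative in the direction `a` of `F(u) = (D(u) g) · n`, and
`F(u) = (φ d_m + d_t |u|)(n · g) + (d_l - d_t)(n · u)(g · u) / |u|`.
At `u = v` the second term vanishes since `n · v = 0`, so `F(v) = 0` forces `n · g = 0`. Then
`F(u) = (n · u) h(u)` with `h` differentiable at `v`, and the product rule gives
`F'(v) a = (n · a) h(v) + (n · v) h'(v) a = 0`.
-/

open Matrix

lemma norm2_pos {v : Fin 2 → ℝ} (hv : v ≠ 0) : 0 < norm2 v := by
  obtain ⟨i, hi⟩ := Function.ne_iff.mp hv
  exact Real.sqrt_pos.mpr <| (Finset.sum_pos_iff_of_nonneg fun j _ => sq_nonneg (v j)).mpr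
    ⟨i, Finset.mem_univ i, sq_pos_of_ne_zero hi⟩

lemma differentiableAt_norm2 {v : Fin 2 → ℝ} (hv : v ≠ 0) : DifferentiableAt ℝ norm2 v :=
  DifferentiableAt.sqrt (by fun_prop) (Real.sqrt_pos.mp (norm2_pos hv)).ne'

lemma differentiableAt_bsD (φ dm dt dl : ℝ) {v : Fin 2 → ℝ} (hv : v ≠ 0) (i j : Fin 2) :
    DifferentiableAt ℝ (fun u => bsD φ dm dt dl u i j) v := by
  have hnorm := differentiableAt_norm2 hv
  unfold bsD
  fun_prop (disch := exact (norm2_pos hv).ne')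

lemma sum_pD_mul_eq_fderiv_apply (φ dm dt dl : ℝ) (v a : Fin 2 → ℝ) (i j : Fin 2) :
    ∑ k, pD φ dm dt dl v i j k * a k = fderiv ℝ (fun u => bsD φ dm dt dl u i j) v a := by
  have hsingle (k : Fin 2) : (fun j => if k = j then (1 : ℝ) else 0) = Pi.single k 1 := by
    ext j; simp [Pi.single_apply, eq_comm]
  rw [← ContinuousLinearMap.coe_coe, LinearMap.pi_apply_eq_sum_univ]
  simp only [hsingle, pD, ContinuousLinearMap.coe_coe, smul_eq_mul, mul_comm]

lemma sum_bsD_mul_mul_eq (φ dm dt dl : ℝ) (u n g : Fin 2 → ℝ) :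
    ∑ i, (∑ j, bsD φ dm dt dl u i j * g j) * n i =
      (φ * dm + dt * norm2 u) * (n ⬝ᵥ g) + (dl - dt) * (n ⬝ᵥ u) * (g ⬝ᵥ u) / norm2 u := by
  simp only [bsD, dotProduct, Fin.sum_univ_two, Fin.isValue, ↓reduceIte, zero_ne_one, one_ne_zero,
    mul_one, mul_zero, zero_add]
  ring

lemma sum_sum_pD_mul_eq_fderiv_apply (φ dm dt dl : ℝ) {v : Fin 2 → ℝ} (hv : v ≠ 0)
    (n a g : Fin 2 → ℝ) :
    ∑ i, n i * ∑ j, (∑ k, pD φ dm dt dl v i j k * a k) * g j =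
      fderiv ℝ (fun u => ∑ i, (∑ j, bsD φ dm dt dl u i j * g j) * n i) v a := by
  have hD := differentiableAt_bsD φ dm dt dl hv
  have hF : HasFDerivAt (fun u => ∑ i, (∑ j, bsD φ dm dt dl u i j * g j) * n i)
      (∑ i, n i • ∑ j, g j • fderiv ℝ (fun u => bsD φ dm dt dl u i j) v) v :=
    .fun_sum fun i _ =>
      (HasFDerivAt.fun_sum fun j _ => (hD i j).hasFDerivAt.mul_const (g j)).mul_const (n i)
  simp only [hF.fderiv, sum_pD_mul_eq_fderiv_apply]
  simp [mul_add, mul_comm]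

lemma differentiableAt_dotProduct {ι : Type*} [Fintype ι] (n v : ι → ℝ) :
    DifferentiableAt ℝ (n ⬝ᵥ ·) v :=
  (LinearMap.toContinuousLinearMap (dotProductBilin ℝ ℝ n)).differentiableAt

lemma fderiv_dotProduct_apply {ι : Type*} [Fintype ι] (n v a : ι → ℝ) :
    fderiv ℝ (n ⬝ᵥ ·) v a = n ⬝ᵥ a :=
  congrArg (· a) (LinearMap.toContinuousLinearMap (dotProductBilin ℝ ℝ n)).fderiv

lemma fderiv_dotProduct_mul_apply_eq_zero {ι : Type*} [Fintype ι] {h : (ι → ℝ) → ℝ}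
    {n v a : ι → ℝ} (hh : DifferentiableAt ℝ h v) (hnv : n ⬝ᵥ v = 0) (hna : n ⬝ᵥ a = 0) :
    fderiv ℝ (fun u => (n ⬝ᵥ u) * h u) v a = 0 := by
  simp [fderiv_fun_mul (differentiableAt_dotProduct n v) hh, fderiv_dotProduct_apply, hnv, hna]

theorem stmt4_general (φ dm dt dl : ℝ) (hφ : 0 < φ) (hdm : 0 < dm) (hdt : 0 < dt)
    (n v a g : Fin 2 → ℝ) (hv : v ≠ 0)
    (hvn : ∑ i, v i * n i = 0) (han : ∑ i, a i * n i = 0)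
    (hg : ∑ i, (∑ j, bsD φ dm dt dl v i j * g j) * n i = 0) :
    ∑ i, n i * ∑ j, (∑ k, pD φ dm dt dl v i j k * a k) * g j = 0 := by
  have hN := norm2_pos hv
  have hnv : n ⬝ᵥ v = 0 := dotProduct_comm n v ▸ hvn
  have hna : n ⬝ᵥ a = 0 := dotProduct_comm n a ▸ han
  have hng : n ⬝ᵥ g = 0 := by
    rw [sum_bsD_mul_mul_eq, hnv, mul_zero, zero_mul, zero_div, add_zero] at hg
    exact (mul_eq_zero.mp hg).resolve_left (by positivity)
  have hG : (fun u => ∑ i, (∑ j, bsD φ dm dt dl u i j * g j) * n i) =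
      fun u => (n ⬝ᵥ u) * ((dl - dt) * (g ⬝ᵥ u) / norm2 u) := by
    ext u
    rw [sum_bsD_mul_mul_eq, hng]
    ring
  rw [sum_sum_pD_mul_eq_fderiv_apply φ dm dt dl hv, hG]
  have hnorm := differentiableAt_norm2 hv
  have hdot := differentiableAt_dotProduct g v
  exact fderiv_dotProduct_mul_apply_eq_zero (by fun_prop (disch := exact hN.ne')) hnv hna

theorem stmt4 (φ dm dt dl : ℝ) (hφ : 0 < φ) (hdm : 0 < dm) (hdt : 0 < dt) (hdl : 0 < dl)
    (n v a g : Fin 2 → ℝ) (hn : ∑ i, n i ^ 2 = 1) (hv : v ≠ 0)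
    (hvn : ∑ i, v i * n i = 0) (han : ∑ i, a i * n i = 0)
    (hg : ∑ i, (∑ j, bsD φ dm dt dl v i j * g j) * n i = 0) :
    ∑ i, n i * ∑ j, (∑ k, pD φ dm dt dl v i j k * a k) * g j = 0 :=
  stmt4_general φ dm dt dl hφ hdm hdt n v a g hv hvn han hg
end

section
/- Let n ∈ ℝ² be a unit vector and let v ∈ ℝ² be nonzero with v · n = 0, and let g, w ∈ ℝ² satisfy g · n = 0 and w · n = 0. For the dispersive part Dˡ_{ij}(v) = (d_l − d_t) v_i v_j / |v| of the Bear–Scheidegger tensor one has Σ_{k=1}^{2} n_k Σ_{i=1}^{2} (Σ_{j=1}^{2} ∂_{v_k} Dˡ_{ij}(v) g_j) w_i = 0. -/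
open scoped BigOperators

/-- The dispersive part of the 2D Bear–Scheidegger tensor. -/
noncomputable def bsDl (dt dl : ℝ) (v : Fin 2 → ℝ) (i j : Fin 2) : ℝ :=
  (dl - dt) * v i * v j / norm2 v

/-- The partial derivative `∂_{v_k} Dˡ_{ij}(v)`. -/
noncomputable def pDl (dt dl : ℝ) (v : Fin 2 → ℝ) (i j k : Fin 2) : ℝ :=
  fderiv ℝ (fun u => bsDl dt dl u i j) v (Pi.single k 1)

/-!
Contracting with `n` in `k` turns `∑ₖ nₖ ∂ₖ Dˡᵢⱼ(v)` into the directional derivative of `Dˡᵢⱼ`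
along `n`, which is `(d_l - d_t) ((nᵢvⱼ + vᵢnⱼ)|v|² - vᵢvⱼ (v·n)) / |v|³`. Since `v·n = 0`, what is
left after contracting with `g` and `w` is `(d_l - d_t) ((n·w)(v·g) + (v·w)(n·g)) / |v|`, and both
products contain a factor that vanishes.
-/

theorem hasDerivAt_add_smul_apply {ι : Type*} (v h : ι → ℝ) (m : ι) (t : ℝ) :
    HasDerivAt (fun t : ℝ => (v + t • h) m) (h m) t := by
  simpa using ((hasDerivAt_id t).mul_const (h m)).const_add (v m)

section
variable {ι : Type*} [Fintype ι]

theorem sum_mul_apply_single [DecidableEq ι] (L : (ι → ℝ) →L[ℝ] ℝ) (n : ι → ℝ) :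
    ∑ k, n k * L (Pi.single k 1) = L n := by
  conv_rhs => rw [pi_eq_sum_univ' n]
  simp [map_smul]

theorem sum_sq_pos_of_ne_zero {v : ι → ℝ} (hv : v ≠ 0) : 0 < ∑ l, v l ^ 2 := by
  obtain ⟨l, hl⟩ := Function.ne_iff.mp hv
  exact Finset.sum_pos' (fun _ _ => sq_nonneg _) ⟨l, Finset.mem_univ _, sq_pos_of_ne_zero hl⟩

theorem hasDerivAt_sqrt_sum_sq_add_smul {v : ι → ℝ} (hv : v ≠ 0) (h : ι → ℝ) :
    HasDerivAt (fun t : ℝ => √(∑ l, (v + t • h) l ^ 2))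
      ((∑ l, v l * h l) / √(∑ l, v l ^ 2)) 0 := by
  have hsum : HasDerivAt (fun t : ℝ => ∑ l, (v + t • h) l ^ 2) (∑ l, 2 * (v l * h l)) 0 :=
    HasDerivAt.fun_sum fun l _ =>
      (hasDerivAt_add_smul_apply v h l 0).fun_pow 2 |>.congr_deriv (by simp; ring)
  convert hsum.sqrt (by simpa using (sum_sq_pos_of_ne_zero hv).ne') using 1
  rw [← Finset.mul_sum]
  simp only [zero_smul, add_zero]
  field_simp

theorem fderiv_mul_mul_div_sqrt_sum_sq_apply {v : ι → ℝ} (hv : v ≠ 0) (c : ℝ) (i j : ι)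
    (h : ι → ℝ) :
    fderiv ℝ (fun u : ι → ℝ => c * u i * u j / √(∑ l, u l ^ 2)) v h =
      c * ((h i * v j + v i * h j) * √(∑ l, v l ^ 2) ^ 2 - v i * v j * ∑ l, v l * h l) /
        √(∑ l, v l ^ 2) ^ 3 := by
  have hpos := sum_sq_pos_of_ne_zero hv
  have hQ : ∑ l, v l ^ 2 ≠ 0 := hpos.ne'
  have hN : √(∑ l, v l ^ 2) ≠ 0 := Real.sqrt_ne_zero'.mpr hpos
  have hdiff : DifferentiableAt ℝ (fun u : ι → ℝ => c * u i * u j / √(∑ l, u l ^ 2)) v := by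
    fun_prop (disch := assumption)
  have hnum : HasDerivAt (fun t : ℝ => c * (v + t • h) i * (v + t • h) j)
      (c * (h i * v j + v i * h j)) 0 :=
    ((hasDerivAt_add_smul_apply v h i 0).const_mul c).fun_mul (hasDerivAt_add_smul_apply v h j 0)
      |>.congr_deriv (by simp; ring)
  have hden := hasDerivAt_sqrt_sum_sq_add_smul hv h
  rw [← hdiff.lineDeriv_eq_fderiv, lineDeriv,
    (hnum.fun_div hden (by simpa using hN)).deriv]
  simp only [zero_smul, add_zero]
  field_simp

end

theorem fderiv_bsDl_apply (dt dl : ℝ) {v : Fin 2 → ℝ} (hv : v ≠ 0) (i j : Fin 2)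
    (h : Fin 2 → ℝ) :
    fderiv ℝ (fun u => bsDl dt dl u i j) v h =
      (dl - dt) * ((h i * v j + v i * h j) * norm2 v ^ 2 - v i * v j * ∑ l, v l * h l) /
        norm2 v ^ 3 :=
  fderiv_mul_mul_div_sqrt_sum_sq_apply hv (dl - dt) i j h

theorem stmt7_general (dt dl : ℝ)
    (n v g w : Fin 2 → ℝ) (hv : v ≠ 0)
    (hvn : ∑ i, v i * n i = 0) (hgn : ∑ i, g i * n i = 0) (hwn : ∑ i, w i * n i = 0) :
    ∑ k, n k * ∑ i, (∑ j, pDl dt dl v i j k * g j) * w i = 0 := by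
  have hN : norm2 v ≠ 0 := Real.sqrt_ne_zero'.mpr (sum_sq_pos_of_ne_zero hv)
  have hdir (i j : Fin 2) :
      ∑ k, n k * pDl dt dl v i j k = (dl - dt) * (n i * v j + v i * n j) / norm2 v := by
    simp only [pDl]
    rw [sum_mul_apply_single, fderiv_bsDl_apply dt dl hv, hvn]
    field_simp
    ring
  calc ∑ k, n k * ∑ i, (∑ j, pDl dt dl v i j k * g j) * w i
      = ∑ i, ∑ j, (∑ k, n k * pDl dt dl v i j k) * g j * w i := by
        simp only [Finset.mul_sum, Finset.sum_mul]
        rw [Finset.sum_comm]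
        refine Finset.sum_congr rfl fun i _ => Finset.sum_comm.trans ?_
        simp only [mul_assoc]
    _ = (dl - dt) / norm2 v *
          ((∑ i, w i * n i) * (∑ j, v j * g j) + (∑ i, v i * w i) * ∑ j, g j * n j) := by
        simp only [hdir, Fin.sum_univ_two]
        ring
    _ = 0 := by rw [hwn, hgn]; ring

theorem stmt7 (dt dl : ℝ) (hdt : 0 < dt) (hdl : 0 < dl)
    (n v g w : Fin 2 → ℝ) (hn : ∑ i, n i ^ 2 = 1) (hv : v ≠ 0)
    (hvn : ∑ i, v i * n i = 0) (hgn : ∑ i, g i * n i = 0) (hwn : ∑ i, w i * n i = 0) :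
    ∑ k, n k * ∑ i, (∑ j, pDl dt dl v i j k * g j) * w i = 0 :=
  stmt7_general dt dl n v g w hv hvn hgn hwn
end
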